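/- arXiv:1907.02521 — 6 statements merged into one kernel-verified Lean document; each statement's English description precedes it below -/
import Mathlib

section
/- Let Φ be a positive semidefinite matrix on C^d ⊗ C^m with Tr Φ = 1. Suppose there exist positive semidefinite matrices Φ' and Φ'' with Tr Φ' = Tr Φ'' = 1, a real number s ≥ 0, and the relation Φ = (1+s)Φ' − s Φ'', where additionally Tr[(Φ')^k] ≤ 1/d^{k-1} for all k ≥ 1 (e.g., Φ' is the Choi state of an entanglement-breaking channel with input dimension d). Then for every k ≥ 1, s ≥ d^{(k-1)/k} (Tr[Φ^k])^{1/k} − 1. -/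
/-!
The moment bounds force every eigenvalue of `Φ'` to be at most `1/d`: an eigenvalue `λ > 1/d`
would make `(dλ)^k ≤ d` for all `k`, which is impossible. Hence
`Φ ≤ (1+s)Φ' ≤ ((1+s)/d)·1`, so `Tr Φ^k = ∑ λᵢ^k ≤ ((1+s)/d)^(k-1) ∑ λᵢ = ((1+s)/d)^(k-1)`,
and taking `k`-th roots gives `d^((k-1)/k) (Tr Φ^k)^(1/k) ≤ (1+s)^((k-1)/k) ≤ 1+s`.
-/

open Matrix Filter
open scoped ComplexOrder MatrixOrder

theorem le_of_eventually_pow_le_mul_pow {x r C : ℝ} (hr : 0 < r)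
    (h : ∀ᶠ k : ℕ in atTop, x ^ k ≤ C * r ^ k) : x ≤ r := by
  by_contra! hrx
  have hgrow : Tendsto (fun k : ℕ ↦ (x / r) ^ k) atTop atTop :=
    tendsto_pow_atTop_atTop_of_one_lt ((one_lt_div hr).2 hrx)
  obtain ⟨k, hk, hC⟩ := (h.and (hgrow.eventually_gt_atTop C)).exists
  rw [div_pow, lt_div_iff₀ (pow_pos hr k)] at hC
  linarith

theorem rpow_mul_rpow_le_of_le_div_pow {d t T : ℝ} {k : ℕ} (hk : 1 ≤ k) (hd : 0 < d)
    (ht : 1 ≤ t) (hT : 0 ≤ T) (hTle : T ≤ (t / d) ^ (k - 1)) :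
    d ^ (((k : ℝ) - 1) / k) * T ^ (1 / (k : ℝ)) ≤ t := by
  have hd_rpow : d ^ (((k : ℝ) - 1) / k) = (d ^ (k - 1)) ^ (1 / (k : ℝ)) := by
    rw [← Real.rpow_natCast, ← Real.rpow_mul hd.le, Nat.cast_sub hk, Nat.cast_one, mul_one_div]
  have hprod : d ^ (k - 1) * T ≤ t ^ k := calc
    d ^ (k - 1) * T ≤ d ^ (k - 1) * (t / d) ^ (k - 1) := by gcongr
    _ = t ^ (k - 1) := by rw [div_pow, mul_div_cancel₀ _ (by positivity)]
    _ ≤ t ^ k := pow_le_pow_right₀ ht (Nat.sub_le k 1)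
  calc d ^ (((k : ℝ) - 1) / k) * T ^ (1 / (k : ℝ))
      = (d ^ (k - 1) * T) ^ (1 / (k : ℝ)) := by rw [hd_rpow, Real.mul_rpow (by positivity) hT]
    _ ≤ (t ^ k) ^ (1 / (k : ℝ)) := by gcongr
    _ = t := by rw [one_div, Real.pow_rpow_inv_natCast (by linarith) (by omega)]

namespace Matrix
variable {n 𝕜 : Type*} [Fintype n] [DecidableEq n] [RCLike 𝕜] {A : Matrix n n 𝕜}

lemma IsHermitian.trace_pow (hA : A.IsHermitian) (k : ℕ) :
    (A ^ k).trace = ∑ i, ((hA.eigenvalues i ^ k : ℝ) : 𝕜) := by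
  rw [← cfc_pow_id (R := ℝ) A k hA.isSelfAdjoint, hA.cfc_eq, IsHermitian.cfc,
    Unitary.conjStarAlgAut_apply, trace_mul_cycle, Unitary.coe_star_mul_self, one_mul,
    trace_diagonal]
  rfl

lemma IsHermitian.re_trace_pow (hA : A.IsHermitian) (k : ℕ) :
    RCLike.re (A ^ k).trace = ∑ i, hA.eigenvalues i ^ k := by
  simp [hA.trace_pow]

lemma IsHermitian.le_smul_one_iff (hA : A.IsHermitian) (c : ℝ) :
    A ≤ c • (1 : Matrix n n 𝕜) ↔ ∀ i, hA.eigenvalues i ≤ c := by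
  rw [← Algebra.algebraMap_eq_smul_one, le_algebraMap_iff_spectrum_le hA.isSelfAdjoint,
    hA.spectrum_real_eq_range_eigenvalues, Set.forall_mem_range]

namespace PosSemidef

lemma le_smul_one_of_re_trace_pow_le (hA : A.PosSemidef) {r C : ℝ} (hr : 0 < r)
    (h : ∀ᶠ k in atTop, RCLike.re (A ^ k).trace ≤ C * r ^ k) : A ≤ r • (1 : Matrix n n 𝕜) := by
  refine (hA.1.le_smul_one_iff r).2 fun i ↦ le_of_eventually_pow_le_mul_pow (C := C) hr ?_
  filter_upwards [h] with k hk
  calc hA.1.eigenvalues i ^ k ≤ ∑ j, hA.1.eigenvalues j ^ k :=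
        Finset.single_le_sum (fun j _ ↦ pow_nonneg (hA.eigenvalues_nonneg j) k)
          (Finset.mem_univ i)
    _ = RCLike.re (A ^ k).trace := (hA.1.re_trace_pow k).symm
    _ ≤ C * r ^ k := hk

lemma re_trace_pow_succ_le (hA : A.PosSemidef) {c : ℝ} (hc : A ≤ c • (1 : Matrix n n 𝕜))
    (k : ℕ) : RCLike.re (A ^ (k + 1)).trace ≤ c ^ k * RCLike.re A.trace := by
  have hle := (hA.1.le_smul_one_iff c).1 hc
  simp only [hA.1.re_trace_pow, hA.1.trace_eq_sum_eigenvalues, map_sum, RCLike.ofReal_re,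
    Finset.mul_sum]
  gcongr with i
  rw [pow_succ]
  exact mul_le_mul_of_nonneg_right (pow_le_pow_left₀ (hA.eigenvalues_nonneg i) (hle i) k)
    (hA.eigenvalues_nonneg i)

end PosSemidef
end Matrix

theorem stmt2_general (d m : ℕ) (hd : 0 < d)
    (Φ Φ' Φ'' : Matrix (Fin d × Fin m) (Fin d × Fin m) ℂ)
    (hΦ : Φ.PosSemidef) (ht : Φ.trace = 1)
    (hΦ' : Φ'.PosSemidef)
    (hΦ'' : Φ''.PosSemidef)
    (s : ℝ) (hs : 0 ≤ s)
    (hdec : Φ = ((1 + s : ℝ) : ℂ) • Φ' - ((s : ℝ) : ℂ) • Φ'')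
    (hmom : ∀ k : ℕ, 1 ≤ k → ((Φ' ^ k).trace).re ≤ 1 / (d : ℝ) ^ (k - 1)) :
    ∀ k : ℕ, 1 ≤ k →
      (d : ℝ) ^ (((k : ℝ) - 1) / (k : ℝ)) * (((Φ ^ k).trace).re) ^ ((1 : ℝ) / (k : ℝ)) - 1
        ≤ s := by
  intro k hk
  have hd' : (0 : ℝ) < d := by exact_mod_cast hd
  have hΦ'_le : Φ' ≤ (1 / d : ℝ) • 1 := by
    refine hΦ'.le_smul_one_of_re_trace_pow_le (C := d) (by positivity) ?_
    filter_upwards [eventually_ge_atTop 1] with j hj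
    calc ((Φ' ^ j).trace).re ≤ 1 / (d : ℝ) ^ (j - 1) := hmom j hj
      _ = d * (1 / d) ^ j := by
        obtain ⟨i, rfl⟩ : ∃ i, j = i + 1 := ⟨j - 1, by omega⟩
        simp only [Nat.add_sub_cancel, one_div, inv_pow, pow_succ]
        field_simp
  have hΦ_le : Φ ≤ ((1 + s) / d : ℝ) • 1 := by
    rw [le_iff, hdec, Complex.coe_smul, Complex.coe_smul]
    convert ((le_iff.1 hΦ'_le).smul (a := 1 + s) (by positivity)).add (hΦ''.smul hs) using 1
    module
  have hT := hΦ.re_trace_pow_succ_le hΦ_le (k - 1)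
  rw [Nat.sub_add_cancel hk, ht, RCLike.one_re, mul_one] at hT
  have hT0 : 0 ≤ RCLike.re (Φ ^ k).trace := by
    rw [hΦ.1.re_trace_pow]
    exact Finset.sum_nonneg fun i _ ↦ pow_nonneg (hΦ.eigenvalues_nonneg i) k
  exact sub_le_iff_le_add'.2 (rpow_mul_rpow_le_of_le_div_pow hk hd' (by linarith) hT0 hT)

/-- If a density matrix `Φ` on `C^d ⊗ C^m` decomposes as `Φ = (1+s)Φ' - sΦ''` with `s ≥ 0`,
`Φ', Φ''` density matrices, and `Tr[(Φ')^k] ≤ 1/d^(k-1)` for all `k ≥ 1`, then for every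
`k ≥ 1`, `s ≥ d^((k-1)/k) (Tr[Φ^k])^(1/k) - 1`. -/
theorem stmt2 (d m : ℕ) (hd : 0 < d)
    (Φ Φ' Φ'' : Matrix (Fin d × Fin m) (Fin d × Fin m) ℂ)
    (hΦ : Φ.PosSemidef) (ht : Φ.trace = 1)
    (hΦ' : Φ'.PosSemidef) (ht' : Φ'.trace = 1)
    (hΦ'' : Φ''.PosSemidef) (ht'' : Φ''.trace = 1)
    (s : ℝ) (hs : 0 ≤ s)
    (hdec : Φ = ((1 + s : ℝ) : ℂ) • Φ' - ((s : ℝ) : ℂ) • Φ'')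
    (hmom : ∀ k : ℕ, 1 ≤ k → ((Φ' ^ k).trace).re ≤ 1 / (d : ℝ) ^ (k - 1)) :
    ∀ k : ℕ, 1 ≤ k →
      (d : ℝ) ^ (((k : ℝ) - 1) / (k : ℝ)) * (((Φ ^ k).trace).re) ^ ((1 : ℝ) / (k : ℝ)) - 1
        ≤ s :=
  stmt2_general d m hd Φ Φ' Φ'' hΦ ht hΦ' hΦ'' s hs hdec hmom
end

section
/- The maximally entangled state Φ⁺ = (1/d) Σ_{i,j} |ii⟩⟨jj| on C^d ⊗ C^d can be written as Φ⁺ = d ρ⁺ − (d−1) ρ⁻, where ρ⁻ = (1/(d(d−1))) Σ_{i≠j} |ij⟩⟨ij| and ρ⁺ = (Φ⁺ + (d−1)ρ⁻)/d, and both ρ⁺ and ρ⁻ are separable density matrices whose partial trace over the second system equals I_d/d. -/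
/-
`ρ⁻` is diagonal in the product basis, hence a mixture of the product states `|ij⟩⟨ij|`.
`ρ⁺` has entry `1/d²` at `(p, q)` when `p = q` or both `p` and `q` lie on the diagonal, and `0`
otherwise. It is the uniform mixture, over all characters `ψ` of `(ZMod 3)^d`, of the product states
`|v_ψ⟩⟨v_ψ| ⊗ |v̄_ψ⟩⟨v̄_ψ|` with `v_ψ x = ψ(e_x)/√d`: by orthogonality of characters the averaged
entry `ψ(e_{p₁} - e_{q₁} - e_{p₂} + e_{q₂})` vanishes unless `e_{p₁} + e_{q₂} = e_{q₁} + e_{p₂}`,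
which, since `1 + 1 ≠ 0` in `ZMod 3`, happens exactly when `{p₁, q₂} = {q₁, p₂}` as multisets.
Positivity and unit trace of both states then follow from separability.
-/

open scoped Kronecker
open Matrix
open scoped ComplexOrder

/-- The outer product `|ψ⟩⟨ψ|`. -/
noncomputable def outer {A : Type*} (ψ : A → ℂ) : Matrix A A ℂ :=
  Matrix.vecMulVec ψ (star ψ)

/-- Partial trace over the second tensor factor. -/
noncomputable def ptraceB {A B : Type*} [Fintype B] (ρ : Matrix (A × B) (A × B) ℂ) :
    Matrix A A ℂ :=
  Matrix.of fun i j => ∑ k, ρ (i, k) (j, k)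

/-- A bipartite matrix is separable if it is a convex combination of pure product states. -/
def SepState {A B : Type*} [Fintype A] [Fintype B]
    (ρ : Matrix (A × B) (A × B) ℂ) : Prop :=
  ∃ (n : ℕ) (p : Fin n → ℝ) (ψ : Fin n → A → ℂ) (φ : Fin n → B → ℂ),
    (∀ i, 0 ≤ p i) ∧ (∑ i, p i = 1) ∧
    (∀ i, star (ψ i) ⬝ᵥ ψ i = 1) ∧ (∀ i, star (φ i) ⬝ᵥ φ i = 1) ∧
    ρ = ∑ i, (p i : ℂ) • (outer (ψ i) ⊗ₖ outer (φ i))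

/-- The maximally entangled state `Φ⁺ = (1/d) ∑_{i,j} |ii⟩⟨jj|`. -/
noncomputable def maxEnt (d : ℕ) : Matrix (Fin d × Fin d) (Fin d × Fin d) ℂ :=
  Matrix.of fun p q => if p.1 = p.2 ∧ q.1 = q.2 then (d : ℂ)⁻¹ else 0

/-- The separable state `ρ⁻ = (1/(d(d-1))) ∑_{i≠j} |ij⟩⟨ij|`. -/
noncomputable def rhoMinus (d : ℕ) : Matrix (Fin d × Fin d) (Fin d × Fin d) ℂ :=
  Matrix.of fun p q => if p = q ∧ p.1 ≠ p.2 then ((d : ℂ) * ((d : ℂ) - 1))⁻¹ else 0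

/-- The separable state `ρ⁺ = (Φ⁺ + (d-1)ρ⁻)/d`. -/
noncomputable def rhoPlus (d : ℕ) : Matrix (Fin d × Fin d) (Fin d × Fin d) ℂ :=
  (d : ℂ)⁻¹ • (maxEnt d + ((d : ℂ) - 1) • rhoMinus d)

open Finset

namespace SepState

variable {A B : Type*} [Fintype A] [Fintype B] {ρ : Matrix (A × B) (A × B) ℂ}

theorem of_sum {ι : Type*} [Fintype ι] (p : ι → ℝ) (ψ : ι → A → ℂ) (φ : ι → B → ℂ)
    (hp : ∀ i, 0 ≤ p i) (hp_sum : ∑ i, p i = 1)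
    (hψ : ∀ i, star (ψ i) ⬝ᵥ ψ i = 1) (hφ : ∀ i, star (φ i) ⬝ᵥ φ i = 1)
    (hρ : ρ = ∑ i, (p i : ℂ) • (outer (ψ i) ⊗ₖ outer (φ i))) : SepState ρ := by
  let e := (Fintype.equivFin ι).symm
  refine ⟨Fintype.card ι, p ∘ e, ψ ∘ e, φ ∘ e, fun i => hp _, ?_, fun i => hψ _, fun i => hφ _, ?_⟩
  · rw [← hp_sum]; exact e.sum_comp p
  · rw [hρ]; exact (e.sum_comp _).symm

theorem posSemidef (h : SepState ρ) : ρ.PosSemidef := by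
  obtain ⟨n, p, ψ, φ, hp, -, -, -, rfl⟩ := h
  exact posSemidef_sum _ fun i _ =>
    ((posSemidef_vecMulVec_self_star _).kronecker (posSemidef_vecMulVec_self_star _)).smul
      (Complex.zero_le_real.mpr (hp i))

theorem trace_eq_one (h : SepState ρ) : ρ.trace = 1 := by
  obtain ⟨n, p, ψ, φ, -, hp_sum, hψ, hφ, rfl⟩ := h
  have h_one : ∀ i, trace (outer (ψ i) ⊗ₖ outer (φ i)) = 1 := fun i => by
    rw [trace_kronecker, outer, outer, trace_vecMulVec, trace_vecMulVec, dotProduct_comm, hψ,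
      dotProduct_comm, hφ, mul_one]
  simp only [trace_sum, trace_smul, h_one, smul_eq_mul, mul_one]
  exact_mod_cast hp_sum

end SepState

theorem sepState_diagonal {A B : Type*} [Fintype A] [Fintype B] [DecidableEq A] [DecidableEq B]
    (w : A × B → ℝ) (hw : ∀ x, 0 ≤ w x) (hw_sum : ∑ x, w x = 1) :
    SepState (diagonal fun x => (w x : ℂ)) := by
  refine SepState.of_sum w (fun x => Pi.single x.1 1) (fun x => Pi.single x.2 1) hw hw_sum
    (fun _ => by simp) (fun _ => by simp) ?_
  have h_single : ∀ x : A × B, outer (Pi.single x.1 (1 : ℂ)) ⊗ₖ outer (Pi.single x.2 1) =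
      single x x 1 := fun x => by
    simp [outer, ← single_eq_single_vecMulVec_single, single_kronecker_single]
  ext x y
  simp only [h_single, smul_single, diagonal_apply, Matrix.sum_apply, single_apply]
  by_cases h : x = y
  · subst h; simp
  · rw [if_neg h, sum_eq_zero fun c _ => if_neg fun hc => h (hc.1.symm.trans hc.2)]

theorem ptraceB_diagonal {A B : Type*} [Fintype B] [DecidableEq A] [DecidableEq B]
    (w : A × B → ℂ) :
    ptraceB (diagonal w) = diagonal fun a => ∑ b, w (a, b) := by
  ext a a'
  by_cases h : a = a' <;> simp [ptraceB, diagonal_apply, h]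

section

variable {A : Type*} [Fintype A] [DecidableEq A]

theorem sum_ite_eq_zero_else {R : Type*} [Ring R] (i : A) (c : R) :
    ∑ j, (if i = j then 0 else c) = (Fintype.card A - 1) * c := by
  rw [sum_ite, sum_const_zero, zero_add, sum_const, filter_ne,
    card_erase_of_mem (mem_univ i), card_univ, nsmul_eq_mul,
    Nat.cast_pred (Fintype.card_pos_iff.mpr ⟨i⟩)]

theorem sum_addChar_single_mul_star (p₁ q₁ p₂ q₂ : A) :
    ∑ ψ : AddChar (A → ZMod 3) ℂ, ψ (Pi.single p₁ 1) * star (ψ (Pi.single q₁ 1)) *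
        (star (ψ (Pi.single p₂ 1)) * ψ (Pi.single q₂ 1)) =
      if (p₁ = p₂ ∧ q₁ = q₂) ∨ (p₁ = q₁ ∧ p₂ = q₂) then (Fintype.card (A → ZMod 3) : ℂ) else 0 := by
  simp_rw [Complex.star_def, ← AddChar.map_neg_eq_conj, ← AddChar.map_add_eq_mul]
  rw [AddChar.sum_apply_eq_ite]
  refine if_congr ?_ rfl rfl
  have h_two : (1 : ZMod 3) + 1 ≠ 0 := by decide
  rw [show Pi.single p₁ 1 + -Pi.single q₁ 1 + (-Pi.single p₂ 1 + Pi.single q₂ 1) =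
      (Pi.single p₁ 1 + Pi.single q₂ 1) - (Pi.single q₁ 1 + Pi.single p₂ 1 : A → ZMod 3) by abel,
    sub_eq_zero, Pi.single_add_single_eq_single_add_single one_ne_zero one_ne_zero]
  simp only [h_two, false_and, or_false, true_and]
  constructor <;> rintro (⟨rfl, rfl⟩ | ⟨rfl, rfl⟩) <;> simp

theorem sepState_of_ite_diag_or_eq [Nonempty A] :
    SepState (Matrix.of fun p q : A × A =>
      if (p.1 = p.2 ∧ q.1 = q.2) ∨ p = q then ((Fintype.card A : ℂ) ^ 2)⁻¹ else 0) := by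
  set c : ℝ := (√(Fintype.card A))⁻¹
  have hc : (c : ℂ) ^ 2 = (Fintype.card A : ℂ)⁻¹ := by
    rw [← Complex.ofReal_pow, inv_pow, Real.sq_sqrt (Nat.cast_nonneg _)]
    push_cast; rfl
  have h_unit : ∀ (ψ : AddChar (A → ZMod 3) ℂ) a, star (ψ a) * ψ a = 1 := fun ψ a => by
    rw [Complex.star_def, ← AddChar.map_neg_eq_conj, ← AddChar.map_add_eq_mul, neg_add_cancel,
      AddChar.map_zero_eq_one]
  let v : AddChar (A → ZMod 3) ℂ → A → ℂ := fun ψ x => c * ψ (Pi.single x 1)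
  have h_star_v : ∀ ψ x, star (v ψ x) = c * star (ψ (Pi.single x 1)) := fun ψ x => by
    simp [v]
  have hv : ∀ ψ, star (v ψ) ⬝ᵥ v ψ = 1 := fun ψ => by
    have hx : ∀ x, star (v ψ x) * v ψ x = c ^ 2 := fun x => by
      rw [h_star_v, show c * star (ψ (Pi.single x 1)) * (c * ψ (Pi.single x 1)) =
        c ^ 2 * (star (ψ (Pi.single x 1)) * ψ (Pi.single x 1)) by ring, h_unit, mul_one]
    simp only [dotProduct, Pi.star_apply, hx, sum_const, card_univ, nsmul_eq_mul, hc]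
    exact mul_inv_cancel₀ (Nat.cast_ne_zero.mpr Fintype.card_ne_zero)
  set N := Fintype.card (AddChar (A → ZMod 3) ℂ)
  have hN : (N : ℂ) = Fintype.card (A → ZMod 3) := by simp [N]
  refine SepState.of_sum (fun _ => (N : ℝ)⁻¹) v (fun ψ => star (v ψ)) (fun _ => by positivity)
    ?_ hv (fun ψ => ?_) ?_
  · simp only [sum_const, card_univ, nsmul_eq_mul]
    exact mul_inv_cancel₀ (Nat.cast_ne_zero.mpr Fintype.card_ne_zero)
  · rw [dotProduct_comm, star_star]; exact hv ψ
  · ext ⟨p₁, p₂⟩ ⟨q₁, q₂⟩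
    have h_entry : ∀ ψ, (outer (v ψ) ⊗ₖ outer (star (v ψ))) (p₁, p₂) (q₁, q₂) =
        (c : ℂ) ^ 4 * (ψ (Pi.single p₁ 1) * star (ψ (Pi.single q₁ 1)) *
          (star (ψ (Pi.single p₂ 1)) * ψ (Pi.single q₂ 1))) := fun ψ => by
      simp only [kroneckerMap_apply, outer, vecMulVec_apply, Pi.star_apply, star_star, h_star_v]
      ring
    simp only [Matrix.sum_apply, Matrix.smul_apply, h_entry, smul_eq_mul, ← mul_sum,
      sum_addChar_single_mul_star, of_apply, Prod.mk.injEq]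
    split_ifs
    · push_cast; rw [hN, show (4 : ℕ) = 2 * 2 from rfl, pow_mul, hc]
      field_simp
    · simp

end

section

variable {d : ℕ}

theorem maxEnt_eq_smul_rhoPlus_sub (hd : d ≠ 0) :
    maxEnt d = (d : ℂ) • rhoPlus d - ((d : ℂ) - 1) • rhoMinus d := by
  rw [rhoPlus, smul_smul, mul_inv_cancel₀ (Nat.cast_ne_zero.mpr hd), one_smul, add_sub_cancel_right]

noncomputable def offDiagWeight (d : ℕ) (x : Fin d × Fin d) : ℝ :=
  if x.1 = x.2 then 0 else ((d : ℝ) * (d - 1))⁻¹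

theorem rhoMinus_eq_diagonal :
    rhoMinus d = diagonal fun x => (offDiagWeight d x : ℂ) := by
  ext p q
  by_cases hpq : p = q
  · subst hpq
    by_cases h : p.1 = p.2 <;> simp [rhoMinus, offDiagWeight, h]
  · simp [rhoMinus, hpq]

theorem sum_offDiagWeight (hd : 2 ≤ d) (i : Fin d) :
    ∑ j, offDiagWeight d (i, j) = (d : ℝ)⁻¹ := by
  have h_pred : (d : ℝ) - 1 ≠ 0 := sub_ne_zero.mpr (Nat.cast_ne_one.mpr (by omega))
  simp only [offDiagWeight]
  rw [sum_ite_eq_zero_else, Fintype.card_fin]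
  field_simp

theorem sepState_rhoMinus (hd : 2 ≤ d) : SepState (rhoMinus d) := by
  rw [rhoMinus_eq_diagonal]
  refine sepState_diagonal _ (fun x => ?_) ?_
  · have h_pred : (0 : ℝ) ≤ d - 1 := sub_nonneg.mpr (by exact_mod_cast (by omega : 1 ≤ d))
    unfold offDiagWeight
    split_ifs
    · exact le_rfl
    · positivity
  · rw [Fintype.sum_prod_type]
    simp only [sum_offDiagWeight hd, sum_const, card_univ, Fintype.card_fin,
      nsmul_eq_mul]
    exact mul_inv_cancel₀ (Nat.cast_ne_zero.mpr (by omega))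

theorem ptraceB_rhoMinus (hd : 2 ≤ d) :
    ptraceB (rhoMinus d) = (d : ℂ)⁻¹ • (1 : Matrix (Fin d) (Fin d) ℂ) := by
  rw [rhoMinus_eq_diagonal, ptraceB_diagonal, smul_one_eq_diagonal]
  congr 1
  funext i
  rw [← Complex.ofReal_sum, sum_offDiagWeight hd]
  push_cast; rfl

theorem rhoPlus_apply (hd : 2 ≤ d) (p q : Fin d × Fin d) :
    rhoPlus d p q = if (p.1 = p.2 ∧ q.1 = q.2) ∨ p = q then ((d : ℂ) ^ 2)⁻¹ else 0 := by
  have h_pred : (d : ℂ) - 1 ≠ 0 := sub_ne_zero.mpr (Nat.cast_ne_one.mpr (by omega))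
  have h_weight : ((d : ℂ) - 1) * ((d : ℂ) * ((d : ℂ) - 1))⁻¹ = (d : ℂ)⁻¹ := by
    field_simp
  simp only [rhoPlus, maxEnt, rhoMinus, Matrix.smul_apply, Matrix.add_apply, of_apply,
    smul_eq_mul]
  by_cases hA : p.1 = p.2 ∧ q.1 = q.2
  · rw [if_pos hA, if_neg fun hB => hB.2 hA.1, if_pos (Or.inl hA)]
    ring
  · by_cases hpq : p = q
    · rw [if_neg hA, if_pos ⟨hpq, fun h => hA ⟨h, hpq ▸ h⟩⟩, if_pos (Or.inr hpq), h_weight]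
      ring
    · rw [if_neg hA, if_neg fun hB => hpq hB.1, if_neg fun h => h.elim hA hpq]
      ring

theorem sepState_rhoPlus (hd : 2 ≤ d) : SepState (rhoPlus d) := by
  have : Nonempty (Fin d) := ⟨⟨0, by omega⟩⟩
  convert sepState_of_ite_diag_or_eq (A := Fin d) using 1
  ext p q
  rw [rhoPlus_apply hd, of_apply, Fintype.card_fin]

theorem ptraceB_rhoPlus (hd : 2 ≤ d) :
    ptraceB (rhoPlus d) = (d : ℂ)⁻¹ • (1 : Matrix (Fin d) (Fin d) ℂ) := by
  ext i j
  simp only [ptraceB, of_apply, rhoPlus_apply hd, Matrix.smul_apply, smul_eq_mul]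
  by_cases h : i = j
  · subst h
    simp only [and_self, or_true, if_true, sum_const, card_univ, Fintype.card_fin,
      nsmul_eq_mul, one_apply_eq, mul_one]
    field_simp
  · rw [one_apply_ne h, mul_zero]
    refine sum_eq_zero fun k _ => if_neg ?_
    rintro (⟨rfl, rfl⟩ | hk)
    exacts [h rfl, h (congrArg Prod.fst hk)]

end

/-- The maximally entangled state decomposes as `Φ⁺ = d ρ⁺ - (d-1) ρ⁻` where `ρ⁺` and
`ρ⁻` are separable density matrices whose partial trace over the second system is
`I_d/d`. -/
theorem stmt6 (d : ℕ) (hd : 2 ≤ d) :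
    maxEnt d = (d : ℂ) • rhoPlus d - ((d : ℂ) - 1) • rhoMinus d ∧
    SepState (rhoPlus d) ∧ SepState (rhoMinus d) ∧
    (rhoPlus d).PosSemidef ∧ (rhoPlus d).trace = 1 ∧
    (rhoMinus d).PosSemidef ∧ (rhoMinus d).trace = 1 ∧
    ptraceB (rhoPlus d) = (d : ℂ)⁻¹ • (1 : Matrix (Fin d) (Fin d) ℂ) ∧
    ptraceB (rhoMinus d) = (d : ℂ)⁻¹ • (1 : Matrix (Fin d) (Fin d) ℂ) := by
  have h_plus := sepState_rhoPlus hd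
  have h_minus := sepState_rhoMinus hd
  exact ⟨maxEnt_eq_smul_rhoPlus_sub (by omega), h_plus, h_minus, h_plus.posSemidef,
    h_plus.trace_eq_one, h_minus.posSemidef, h_minus.trace_eq_one, ptraceB_rhoPlus hd,
    ptraceB_rhoMinus hd⟩
end

section
/- Suppose a channel N admits a decomposition N = Σ_i c_i M_i with real coefficients c_i and trace-preserving maps M_i belonging to a convex set F of channels. Write s = Σ_{i: c_i < 0} |c_i|. Then Σ_i |c_i| = 2s + 1, and there exist M, M' ∈ F with N = (1+s)M' − sM. Conversely, any such two-term decomposition gives a decomposition with ℓ¹-norm 2s+1. Hence the minimal ℓ¹-norm over all decompositions equals 1 + 2R(N), where R(N) is the robustness of N with respect to F. -/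
/-!
Applying the trace functional `T` to `N = ∑ cᵢ • Mᵢ` gives `∑ cᵢ = 1`, so the positive parts of
the coefficients sum to `1 + s` with `s = ∑ cᵢ⁻`, and `∑ |cᵢ| = 2s + 1`. Normalising the positive
and the negative parts separately gives two convex combinations `M'`, `M''` of the `Mᵢ` with
`N = (1 + s) • M' - s • M''`. Such a two-term decomposition says exactly that
`(N + s • M'') / (1 + s) = M' ∈ F`, so `rob F N ≤ s`: every decomposition has ℓ¹-norm at least
`1 + 2 rob F N`, and an optimal witness for the robustness gives one of exactly that norm.
-/

/-- The robustness of `N` with respect to the free set `F`. -/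
noncomputable def rob {V : Type*} [AddCommGroup V] [Module ℝ V] (F : Set V) (N : V) : ℝ :=
  sInf {s : ℝ | 0 ≤ s ∧ ∃ M ∈ F, (1 / (1 + s)) • N + (s / (1 + s)) • M ∈ F}

lemma negPart_eq_ite_abs {α : Type*} [AddCommGroup α] [LinearOrder α] [IsOrderedAddMonoid α]
    (x : α) : x⁻ = if x < 0 then |x| else 0 := by
  split_ifs with h
  · rw [abs_of_neg h, negPart_eq_neg.mpr h.le]
  · exact negPart_eq_zero.mpr (not_lt.mp h)

lemma abs_eq_add_two_mul_negPart {α : Type*} [CommRing α] [LinearOrder α] [IsStrictOrderedRing α]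
    (x : α) : |x| = x + 2 * x⁻ := by
  have := posPart_add_negPart x
  have := posPart_sub_negPart x
  linarith

lemma Finset.sum_abs_eq_two_mul_sum_negPart_add_sum {α ι : Type*} [CommRing α] [LinearOrder α]
    [IsStrictOrderedRing α] (t : Finset ι) (c : ι → α) :
    ∑ i ∈ t, |c i| = 2 * ∑ i ∈ t, (c i)⁻ + ∑ i ∈ t, c i := by
  simp only [abs_eq_add_two_mul_negPart, Finset.sum_add_distrib, ← Finset.mul_sum]
  ring

section

variable {V : Type*} [AddCommGroup V] [Module ℝ V] {F : Set V} {ι : Type*} [Fintype ι]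

lemma sum_eq_one_of_map_sum_smul_eq_one (T : V →ₗ[ℝ] ℝ) (hTF : ∀ M ∈ F, T M = 1)
    {c : ι → ℝ} {M : ι → V} (hM : ∀ i, M i ∈ F) (hT : T (∑ i, c i • M i) = 1) :
    ∑ i, c i = 1 := by
  simpa [hTF _ (hM _)] using hT

lemma Convex.exists_sum_smul_eq_smul_of_nonneg (hF : Convex ℝ F) (hne : F.Nonempty)
    {w : ι → ℝ} (hw : ∀ i, 0 ≤ w i) {M : ι → V} (hM : ∀ i, M i ∈ F) :
    ∃ P ∈ F, ∑ i, w i • M i = (∑ i, w i) • P := by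
  rcases (Finset.sum_nonneg fun i _ => hw i).eq_or_lt with hzero | hpos
  · obtain ⟨P, hP⟩ := hne
    have hw0 : ∀ i, w i = 0 := fun i =>
      (Finset.sum_eq_zero_iff_of_nonneg fun i _ => hw i).mp hzero.symm i (Finset.mem_univ i)
    exact ⟨P, hP, by simp [hw0]⟩
  · refine ⟨Finset.univ.centerMass w M,
      hF.centerMass_mem (fun i _ => hw i) hpos (fun i _ => hM i), ?_⟩
    rw [Finset.centerMass, smul_smul, mul_inv_cancel₀ hpos.ne', one_smul]

lemma Convex.exists_sum_smul_eq_smul_sub_smul (hF : Convex ℝ F) (hne : F.Nonempty)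
    {c : ι → ℝ} {M : ι → V} (hM : ∀ i, M i ∈ F) (hc : ∑ i, c i = 1) :
    ∃ M' ∈ F, ∃ M'' ∈ F,
      ∑ i, c i • M i = (1 + ∑ i, (c i)⁻) • M' - (∑ i, (c i)⁻) • M'' := by
  obtain ⟨M', hM', hpos⟩ := hF.exists_sum_smul_eq_smul_of_nonneg hne (fun i => posPart_nonneg _) hM
  obtain ⟨M'', hM'', hneg⟩ :=
    hF.exists_sum_smul_eq_smul_of_nonneg hne (fun i => negPart_nonneg _) hM
  have hsum : ∑ i, (c i)⁺ = 1 + ∑ i, (c i)⁻ := by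
    rw [← hc, ← sub_eq_iff_eq_add, ← Finset.sum_sub_distrib]
    simp only [posPart_sub_negPart]
  refine ⟨M', hM', M'', hM'', ?_⟩
  rw [← hsum, ← hpos, ← hneg, ← Finset.sum_sub_distrib]
  simp only [← sub_smul, posPart_sub_negPart]

lemma eq_smul_sub_smul_iff {N M' M'' : V} {s : ℝ} (hs : 0 ≤ s) :
    N = (1 + s) • M' - s • M'' ↔ (1 / (1 + s)) • N + (s / (1 + s)) • M'' = M' := by
  have hs₁ : (1 + s) ≠ 0 := by positivity
  constructor
  · rintro rfl
    rw [smul_sub, smul_smul, smul_smul, one_div, inv_mul_cancel₀ hs₁, one_smul, div_eq_inv_mul,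
      sub_add_cancel]
  · rintro rfl
    rw [smul_add, smul_smul, smul_smul, mul_one_div_cancel hs₁, one_smul, mul_div_cancel₀ _ hs₁,
      add_sub_cancel_right]

lemma rob_le_of_eq_smul_sub_smul {N M' M'' : V} {s : ℝ} (hs : 0 ≤ s) (hM' : M' ∈ F)
    (hM'' : M'' ∈ F) (hN : N = (1 + s) • M' - s • M'') : rob F N ≤ s :=
  csInf_le ⟨0, fun _ hx => hx.1⟩ ⟨hs, M'', hM'', (eq_smul_sub_smul_iff hs).mp hN ▸ hM'⟩

lemma exists_fin_two_decomposition {N M' M'' : V} {s : ℝ} (hs : 0 ≤ s) (hM' : M' ∈ F)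
    (hM'' : M'' ∈ F) (hN : N = (1 + s) • M' - s • M'') :
    ∃ (k : ℕ) (a : Fin k → ℝ) (P : Fin k → V),
      (∀ i, P i ∈ F) ∧ N = ∑ i, a i • P i ∧ ∑ i, |a i| = 2 * s + 1 := by
  refine ⟨2, ![1 + s, -s], ![M', M''], fun i => by fin_cases i <;> assumption, ?_, ?_⟩
  · simp [hN, sub_eq_add_neg]
  · simp only [Fin.sum_univ_two, Matrix.cons_val_zero, Matrix.cons_val_one,
      Matrix.cons_val_fin_one, abs_neg, abs_of_nonneg hs, abs_of_nonneg (by linarith : 0 ≤ 1 + s)]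
    ring

lemma one_add_two_mul_rob_le_sum_abs (hF : Convex ℝ F) (hne : F.Nonempty) (T : V →ₗ[ℝ] ℝ) (hTF : ∀ M ∈ F, T M = 1) {N : V} (hTN : T N = 1)
    {a : ι → ℝ} {P : ι → V} (hP : ∀ i, P i ∈ F) (hN : N = ∑ i, a i • P i) :
    1 + 2 * rob F N ≤ ∑ i, |a i| := by
  have ha := sum_eq_one_of_map_sum_smul_eq_one T hTF hP (hN ▸ hTN)
  obtain ⟨M', hM', M'', hM'', hdec⟩ := hF.exists_sum_smul_eq_smul_sub_smul hne hP ha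
  have hrob := rob_le_of_eq_smul_sub_smul (Finset.sum_nonneg fun i _ => negPart_nonneg (a i))
    hM' hM'' (hN.trans hdec)
  rw [Finset.sum_abs_eq_two_mul_sum_negPart_add_sum, ha]
  linarith

end

/-- If `N = ∑ c i • M i` with `M i ∈ F` (each normalized, `T (M i) = 1`, `T` the trace
functional, `T N = 1`), and `s = ∑_{c i < 0} |c i|`, then `∑ |c i| = 2s + 1` and
`N = (1+s)M' - sM''` for some `M', M'' ∈ F`; conversely any two-term decomposition
`N = (1+s')M' - s'M''` gives a decomposition of ℓ¹-norm `2s'+1`; hence the minimal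
ℓ¹-norm over all decompositions of `N` into members of `F` equals `1 + 2·rob F N`. -/
theorem stmt10 {V : Type*} [AddCommGroup V] [Module ℝ V]
    (F : Set V) (hF : Convex ℝ F) (hne : F.Nonempty)
    (T : V →ₗ[ℝ] ℝ) (hTF : ∀ M ∈ F, T M = 1)
    (N : V) (hTN : T N = 1)
    (m : ℕ) (c : Fin m → ℝ) (M : Fin m → V) (hM : ∀ i, M i ∈ F)
    (hdec : N = ∑ i, c i • M i)
    (s : ℝ) (hs : s = ∑ i, if c i < 0 then |c i| else 0)
    (hatt : 0 ≤ rob F N ∧ ∃ M' ∈ F,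
      (1 / (1 + rob F N)) • N + (rob F N / (1 + rob F N)) • M' ∈ F) :
    (∑ i, |c i| = 2 * s + 1) ∧
    (∃ M' ∈ F, ∃ M'' ∈ F, N = (1 + s) • M' - s • M'') ∧
    (∀ s' : ℝ, 0 ≤ s' → ∀ M' ∈ F, ∀ M'' ∈ F, N = (1 + s') • M' - s' • M'' →
      ∃ (k : ℕ) (a : Fin k → ℝ) (P : Fin k → V),
        (∀ i, P i ∈ F) ∧ N = ∑ i, a i • P i ∧ ∑ i, |a i| = 2 * s' + 1) ∧
    sInf {t : ℝ | ∃ (k : ℕ) (a : Fin k → ℝ) (P : Fin k → V),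
        (∀ i, P i ∈ F) ∧ N = ∑ i, a i • P i ∧ t = ∑ i, |a i|}
      = 1 + 2 * rob F N := by
  have hc := sum_eq_one_of_map_sum_smul_eq_one T hTF hM (hdec ▸ hTN)
  have hs_neg : s = ∑ i, (c i)⁻ := by simp only [hs, negPart_eq_ite_abs]
  obtain ⟨hr, Q, hQ, hmix⟩ := hatt
  have hNr : N = (1 + rob F N) • _ - rob F N • Q := (eq_smul_sub_smul_iff hr).mpr rfl
  refine ⟨?_, hs_neg ▸ hdec ▸ hF.exists_sum_smul_eq_smul_sub_smul hne hM hc,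
    fun s' hs' M' hM' M'' hM'' hN => exists_fin_two_decomposition hs' hM' hM'' hN, ?_⟩
  · rw [Finset.sum_abs_eq_two_mul_sum_negPart_add_sum, hc, hs_neg]
  refine IsLeast.csInf_eq ⟨?_, ?_⟩
  · obtain ⟨k, a, P, hP, hN, ha⟩ := exists_fin_two_decomposition hr hmix hQ hNr
    exact ⟨k, a, P, hP, hN, by linarith⟩
  · rintro t ⟨k, a, P, hP, hN, rfl⟩
    exact one_add_two_mul_rob_le_sum_abs hF hne T hTF hTN hP hN
end

section
/- With the generalized robustness R_G(N) = min{s ≥ 0 : ∃ channel M with (N+sM)/(1+s) ∈ F}, where F is convex and closed under tensor products, one has R_G(N₁ ⊗ N₂) ≤ R_G(N₁)R_G(N₂) + R_G(N₁) + R_G(N₂); equivalently 1 + R_G(N₁⊗N₂) ≤ (1+R_G(N₁))(1+R_G(N₂)). -/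
open scoped TensorProduct

/-- The generalized robustness of `N`: the least `s ≥ 0` such that mixing `N` with some
channel `M ∈ C` (an arbitrary channel) with weight `s/(1+s)` gives a member of the free
set `F`. -/
noncomputable def grob {V : Type*} [AddCommGroup V] [Module ℝ V] (C F : Set V) (N : V) : ℝ :=
  sInf {s : ℝ | 0 ≤ s ∧ ∃ M ∈ C, (1 / (1 + s)) • N + (s / (1 + s)) • M ∈ F}

/-!
Write a mixture as `(1 + s)⁻¹ • (N + s • M)`. If `N₁ + s₁ • M₁` and `N₂ + s₂ • M₂` are
witnesses for `N₁` and `N₂`, their tensor product is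
`N₁ ⊗ N₂ + s₁ • M₁ ⊗ N₂ + s₂ • N₁ ⊗ M₂ + s₁ s₂ • M₁ ⊗ M₂`, whose last three terms lie in
`(s₁ + s₂ + s₁ s₂) • C₁₂` by convexity (stated as a cone membership, so that the case
`s₁ + s₂ + s₁ s₂ = 0` needs no division). So `s₁ + s₂ + s₁ s₂` is feasible for `N₁ ⊗ N₂`, and
`1 + (s₁ + s₂ + s₁ s₂) = (1 + s₁)(1 + s₂)`.
-/

section Robustness

variable {V : Type*} [AddCommGroup V] [Module ℝ V]

theorem grob_le_of_mem {C F : Set V} {N M : V} {s : ℝ} (hs : 0 ≤ s) (hM : M ∈ C)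
    (hF : (1 / (1 + s)) • N + (s / (1 + s)) • M ∈ F) : grob C F N ≤ s :=
  csInf_le ⟨0, fun _ ht => ht.1⟩ ⟨hs, M, hM, hF⟩

theorem one_div_smul_add_div_smul (s : ℝ) (N M : V) :
    (1 / (1 + s)) • N + (s / (1 + s)) • M = (1 + s)⁻¹ • (N + s • M) := by
  simp only [div_eq_inv_mul, mul_smul, one_smul, smul_add]

end Robustness

open scoped Pointwise in
theorem Convex.smul_add_smul_add_smul_mem {E : Type*} [AddCommGroup E] [Module ℝ E]
    {C : Set E} (hC : Convex ℝ C) {a b c : ℝ} (ha : 0 ≤ a) (hb : 0 ≤ b) (hc : 0 ≤ c)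
    {x y z : E} (hx : x ∈ C) (hy : y ∈ C) (hz : z ∈ C) :
    a • x + b • y + c • z ∈ (a + b + c) • C := by
  rw [hC.add_smul (add_nonneg ha hb) hc, hC.add_smul ha hb]
  exact Set.add_mem_add (Set.add_mem_add (Set.smul_mem_smul_set hx)
    (Set.smul_mem_smul_set hy)) (Set.smul_mem_smul_set hz)

theorem TensorProduct.add_smul_tmul_add_smul {R V₁ V₂ : Type*} [CommRing R]
    [AddCommGroup V₁] [Module R V₁] [AddCommGroup V₂] [Module R V₂]
    (s₁ s₂ : R) (N₁ M₁ : V₁) (N₂ M₂ : V₂) :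
    (N₁ + s₁ • M₁) ⊗ₜ[R] (N₂ + s₂ • M₂)
      = N₁ ⊗ₜ N₂ + (s₁ • M₁ ⊗ₜ N₂ + s₂ • N₁ ⊗ₜ M₂ + (s₁ * s₂) • M₁ ⊗ₜ M₂) := by
  simp only [add_tmul, tmul_add, ← smul_tmul', tmul_smul]
  module

/-- Sub-multiplicativity of the generalized robustness under tensor products:
`1 + R_G(N₁ ⊗ N₂) ≤ (1 + R_G(N₁))(1 + R_G(N₂))`, where the channel sets and free
sets are convex and closed under tensor products and the minima defining
`R_G(N₁), R_G(N₂)` are attained. -/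
theorem stmt13 {V₁ V₂ : Type*} [AddCommGroup V₁] [Module ℝ V₁]
    [AddCommGroup V₂] [Module ℝ V₂]
    (C₁ F₁ : Set V₁) (C₂ F₂ : Set V₂) (C₁₂ F₁₂ : Set (V₁ ⊗[ℝ] V₂))
    (hCconv : Convex ℝ C₁₂)
    (hCten : ∀ M₁ ∈ C₁, ∀ M₂ ∈ C₂, M₁ ⊗ₜ[ℝ] M₂ ∈ C₁₂)
    (hFten : ∀ M₁ ∈ F₁, ∀ M₂ ∈ F₂, M₁ ⊗ₜ[ℝ] M₂ ∈ F₁₂)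
    (N₁ : V₁) (N₂ : V₂) (hN₁ : N₁ ∈ C₁) (hN₂ : N₂ ∈ C₂)
    (hatt₁ : 0 ≤ grob C₁ F₁ N₁ ∧ ∃ M ∈ C₁,
      (1 / (1 + grob C₁ F₁ N₁)) • N₁ + (grob C₁ F₁ N₁ / (1 + grob C₁ F₁ N₁)) • M ∈ F₁)
    (hatt₂ : 0 ≤ grob C₂ F₂ N₂ ∧ ∃ M ∈ C₂,
      (1 / (1 + grob C₂ F₂ N₂)) • N₂ + (grob C₂ F₂ N₂ / (1 + grob C₂ F₂ N₂)) • M ∈ F₂) :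
    1 + grob C₁₂ F₁₂ (N₁ ⊗ₜ[ℝ] N₂)
      ≤ (1 + grob C₁ F₁ N₁) * (1 + grob C₂ F₂ N₂) := by
  obtain ⟨hs₁, M₁, hM₁, hF₁⟩ := hatt₁
  obtain ⟨hs₂, M₂, hM₂, hF₂⟩ := hatt₂
  set s₁ := grob C₁ F₁ N₁
  set s₂ := grob C₂ F₂ N₂
  obtain ⟨M, hM, hsM : (s₁ + s₂ + s₁ * s₂) • M = _⟩ :=
    hCconv.smul_add_smul_add_smul_mem hs₁ hs₂ (mul_nonneg hs₁ hs₂)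
      (hCten _ hM₁ _ hN₂) (hCten _ hN₁ _ hM₂) (hCten _ hM₁ _ hM₂)
  have hprod := hFten _ hF₁ _ hF₂
  rw [one_div_smul_add_div_smul, one_div_smul_add_div_smul, TensorProduct.smul_tmul_smul,
    ← mul_inv, TensorProduct.add_smul_tmul_add_smul, ← hsM] at hprod
  have hfeasible : grob C₁₂ F₁₂ (N₁ ⊗ₜ[ℝ] N₂) ≤ s₁ + s₂ + s₁ * s₂ := by
    refine grob_le_of_mem (by positivity) hM ?_
    rwa [one_div_smul_add_div_smul, show 1 + (s₁ + s₂ + s₁ * s₂) = (1 + s₁) * (1 + s₂) by ring]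
  linarith
end

section
/- Let Φ_N be the Choi state of a channel N: A → B with max eigenvalue μ > 1/d_A, and let Φ_Δ = I/(d_A d_B) be the Choi state of the completely depolarizing channel. Define M₋ = (μ d_A d_B Δ − N)/(μ d_A d_B − 1) and M₊ = (N + (μ d_A − 1)M₋)/(μ d_A). Then (assuming d_B ≥ 2) both M₊ and M₋ are channels whose Choi states satisfy Φ ≤ I/d_A (i.e., max eigenvalue ≤ 1/d_A), and N = μ d_A M₊ − (μ d_A − 1)M₋. -/
open scoped Kronecker
open Matrix
open scoped ComplexOrder

open scoped MatrixOrder in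
lemma Matrix.IsHermitian.posSemidef_smul_one_sub {ι : Type*} [Fintype ι] [DecidableEq ι]
    {A : Matrix ι ι ℂ} (hA : A.IsHermitian) {μ : ℝ} (h : ∀ i, hA.eigenvalues i ≤ μ) :
    ((μ : ℂ) • 1 - A).PosSemidef := by
  have hle : A ≤ algebraMap ℝ _ μ := le_algebraMap_of_spectrum_le <| by
    rw [hA.spectrum_real_eq_range_eigenvalues]
    rintro _ ⟨i, rfl⟩
    exact h i
  simpa [Matrix.le_iff, Algebra.algebraMap_eq_smul_one] using hle

lemma Matrix.PosSemidef.ofReal_smul {ι : Type*} [Fintype ι] {A : Matrix ι ι ℂ}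
    (hA : A.PosSemidef) {c : ℝ} (hc : 0 ≤ c) : ((c : ℂ) • A).PosSemidef :=
  hA.smul (Complex.zero_le_real.mpr hc)

section PartialTrace

variable {A B : Type*} [Fintype B]

@[simp]
lemma ptraceB_sub (ρ σ : Matrix (A × B) (A × B) ℂ) :
    ptraceB (ρ - σ) = ptraceB ρ - ptraceB σ := by
  ext i j
  simp [ptraceB, Finset.sum_sub_distrib]

@[simp]
lemma ptraceB_smul (c : ℂ) (ρ : Matrix (A × B) (A × B) ℂ) :
    ptraceB (c • ρ) = c • ptraceB ρ := by
  ext i j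
  simp [ptraceB, Finset.mul_sum]

@[simp]
lemma ptraceB_one [DecidableEq A] [DecidableEq B] :
    ptraceB (1 : Matrix (A × B) (A × B) ℂ) = (Fintype.card B : ℂ) • 1 := by
  ext i j
  by_cases hij : i = j <;> simp [ptraceB, Matrix.one_apply, hij]

end PartialTrace

lemma le_mul_mul_sub_one {a e : ℝ} (ha : 1 < a) (he : 2 ≤ e) : a ≤ a * e - 1 := by
  nlinarith

lemma inv_smul_add_smul_eq_of_eq_inv_smul_sub {E : Type*} [AddCommGroup E] [Module ℂ E]
    {x y m : E} {μ d e : ℂ} (hμ : μ ≠ 0) (hd : d ≠ 0) (he : μ * d * e - 1 ≠ 0)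
    (hm : m = (μ * d * e - 1)⁻¹ • (μ • y - x)) :
    (μ * d)⁻¹ • (x + (μ * d - 1) • m) = d⁻¹ • y - (e - 1) • m := by
  have hx : x = μ • y - (μ * d * e - 1) • m := by
    rw [hm, smul_smul, mul_inv_cancel₀ he, one_smul, sub_sub_cancel]
  rw [hx]
  match_scalars
  · field_simp
  · field_simp
    ring

lemma posSemidef_inv_smul_one_sub_inv_smul {ι : Type*} [Fintype ι] [DecidableEq ι]
    {Φ : Matrix ι ι ℂ} {d μ b : ℝ} (hΦ : Φ.PosSemidef) (hd : 0 < d) (hb : 0 < b)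
    (hμ : μ * d ≤ b) :
    ((d : ℂ)⁻¹ • 1 - ((b⁻¹ : ℝ) : ℂ) • ((μ : ℂ) • 1 - Φ)).PosSemidef := by
  have hcoeff : 0 ≤ d⁻¹ - b⁻¹ * μ := by
    rwa [sub_nonneg, inv_mul_le_iff₀ hb, ← div_eq_mul_inv, le_div_iff₀ hd]
  have hsplit : (d : ℂ)⁻¹ • 1 - ((b⁻¹ : ℝ) : ℂ) • ((μ : ℂ) • 1 - Φ)
      = ((d⁻¹ - b⁻¹ * μ : ℝ) : ℂ) • 1 + ((b⁻¹ : ℝ) : ℂ) • Φ := by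
    push_cast
    module
  rw [hsplit]
  exact (PosSemidef.one.ofReal_smul hcoeff).add (hΦ.ofReal_smul (inv_nonneg.mpr hb.le))

/-- Decomposition of a channel via the depolarizing channel: if the Choi state `Φ` of a
channel (PSD with marginal `I/d_A`) has maximal eigenvalue `μ > 1/d_A` and `d_B ≥ 2`,
then `M₋ = (μ d_A d_B Δ - N)/(μ d_A d_B - 1)` and `M₊ = (N + (μ d_A - 1)M₋)/(μ d_A)`
are channels whose Choi states satisfy `Φ ≤ I/d_A`, and `N = μ d_A M₊ - (μ d_A - 1)M₋`. -/
theorem stmt15 (dA dB : ℕ) (hdA : 0 < dA) (hdB : 2 ≤ dB)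
    (Φ : Matrix (Fin dA × Fin dB) (Fin dA × Fin dB) ℂ)
    (hΦ : Φ.PosSemidef)
    (hmarg : ptraceB Φ = (dA : ℂ)⁻¹ • (1 : Matrix (Fin dA) (Fin dA) ℂ))
    (μ : ℝ) (hμgt : 1 / (dA : ℝ) < μ)
    (hμ : IsGreatest (Set.range hΦ.1.eigenvalues) μ)
    (ΦΔ ΦMm ΦMp : Matrix (Fin dA × Fin dB) (Fin dA × Fin dB) ℂ)
    (hΔ : ΦΔ = ((dA : ℂ) * (dB : ℂ))⁻¹ • (1 : Matrix (Fin dA × Fin dB) (Fin dA × Fin dB) ℂ))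
    (hMm : ΦMm = (((μ * dA * dB - 1 : ℝ) : ℂ))⁻¹ • (((μ * dA * dB : ℝ) : ℂ) • ΦΔ - Φ))
    (hMp : ΦMp = (((μ * dA : ℝ) : ℂ))⁻¹ • (Φ + ((μ * dA - 1 : ℝ) : ℂ) • ΦMm)) :
    ΦMm.PosSemidef ∧ ΦMp.PosSemidef ∧
    ptraceB ΦMm = (dA : ℂ)⁻¹ • (1 : Matrix (Fin dA) (Fin dA) ℂ) ∧
    ptraceB ΦMp = (dA : ℂ)⁻¹ • (1 : Matrix (Fin dA) (Fin dA) ℂ) ∧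
    ((dA : ℂ)⁻¹ • (1 : Matrix (Fin dA × Fin dB) (Fin dA × Fin dB) ℂ) - ΦMm).PosSemidef ∧
    ((dA : ℂ)⁻¹ • (1 : Matrix (Fin dA × Fin dB) (Fin dA × Fin dB) ℂ) - ΦMp).PosSemidef ∧
    Φ = ((μ * dA : ℝ) : ℂ) • ΦMp - ((μ * dA - 1 : ℝ) : ℂ) • ΦMm := by
  have hdA' : (0 : ℝ) < dA := by exact_mod_cast hdA
  have hdB' : (2 : ℝ) ≤ dB := by exact_mod_cast hdB
  have hμdA : 1 < μ * dA := (div_lt_iff₀ hdA').mp hμgt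
  have hbound : μ * dA ≤ μ * dA * dB - 1 := le_mul_mul_sub_one hμdA hdB'
  have hμΔ : ((μ * dA * dB : ℝ) : ℂ) • ΦΔ = (μ : ℂ) • 1 := by
    have : (dA : ℂ) * dB ≠ 0 := by norm_cast; exact Nat.mul_ne_zero hdA.ne' (by omega)
    rw [hΔ, smul_smul]
    congr 1
    push_cast
    field_simp
  have hMm' : ΦMm = (((μ * dA * dB - 1)⁻¹ : ℝ) : ℂ) • ((μ : ℂ) • 1 - Φ) := by
    rw [hMm, hμΔ, Complex.ofReal_inv]
  have hMp' : ΦMp = (dA : ℂ)⁻¹ • 1 - ((dB - 1 : ℝ) : ℂ) • ΦMm := by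
    rw [hMp]
    push_cast at hMm' ⊢
    exact inv_smul_add_smul_eq_of_eq_inv_smul_sub (by exact_mod_cast (by nlinarith : μ ≠ 0))
      (by exact_mod_cast hdA.ne') (by exact_mod_cast (by linarith : μ * dA * dB - 1 ≠ 0)) hMm'
  have psdMm : ΦMm.PosSemidef := hMm' ▸
    (hΦ.1.posSemidef_smul_one_sub fun i => hμ.2 ⟨i, rfl⟩).ofReal_smul (inv_nonneg.mpr (by linarith))
  have ptrMm : ptraceB ΦMm = (dA : ℂ)⁻¹ • 1 := by
    have : (μ : ℂ) * dA * dB - 1 ≠ 0 := by exact_mod_cast (by linarith : μ * dA * dB - 1 ≠ 0)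
    simp only [hMm', ptraceB_smul, ptraceB_sub, ptraceB_one, Fintype.card_fin, hmarg, smul_smul]
    match_scalars
    field_simp
  refine ⟨psdMm, ?_, ptrMm, ?_, ?_, ?_, ?_⟩
  · rw [hMp, ← Complex.ofReal_inv]
    exact (hΦ.add (psdMm.ofReal_smul (by linarith))).ofReal_smul (inv_nonneg.mpr (by linarith))
  · simp only [hMp', ptraceB_sub, ptraceB_smul, ptraceB_one, Fintype.card_fin, ptrMm]
    match_scalars
    ring
  · rw [hMm']
    exact posSemidef_inv_smul_one_sub_inv_smul hΦ hdA' (by linarith) hbound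
  · rw [hMp', sub_sub_cancel]
    exact psdMm.ofReal_smul (by linarith)
  · have : ((μ * dA : ℝ) : ℂ) ≠ 0 := by exact_mod_cast (by linarith : (0 : ℝ) < μ * dA).ne'
    rw [hMp, smul_smul, mul_inv_cancel₀ this, one_smul, add_sub_cancel_right]
end

section
/- Let Φ_{N'}, Φ_M be Choi states of channels with Φ_M entanglement-breaking (separable), and suppose (Φ_{N'} + (d_c−1)Φ_M)/d_c = Φ_{M'} is separable, where d_c ≥ 1 is an integer. Define the map on Choi states Λ(Φ_C) = Tr(φ⁺ Φ_C) Φ_{N'} + Tr((I − φ⁺)Φ_C) Φ_M, where φ⁺ is the maximally entangled state on a d_c-dimensional bipartite system. Then: (i) Λ(Φ_{I_{d_c}}) = Φ_{N'}; (ii) for every separable Choi state Φ_C (with marginal I/d_c), Λ(Φ_C) = qΦ_{M'} + (1−q)Φ_M with q = d_c Tr(φ⁺Φ_C) ∈ [0,1], hence Λ(Φ_C) is separable. -/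
/-!
Since `Tr((1 - φ⁺)Φ_C) = Tr Φ_C - Tr(φ⁺Φ_C)` and a Choi state with marginal `I/d_c` has trace
one, `Λ(Φ_C) = t Φ_{N'} + (1 - t) Φ_M` with `t = Tr(φ⁺Φ_C)`, which is `q Φ_{M'} + (1 - q) Φ_M`
for `q = d_c t`. For separable `Φ_C = ∑ₖ pₖ |ψₖ⟩⟨ψₖ| ⊗ |φₖ⟩⟨φₖ|` one has
`d_c Tr(φ⁺Φ_C) = ∑ₖ pₖ |ψₖ ⬝ φₖ|²`, which lies in `[0, 1]` by Cauchy–Schwarz; so `Λ(Φ_C)` is a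
convex combination of the separable states `Φ_{M'}` and `Φ_M`.
-/

open scoped Kronecker
open Matrix
open scoped ComplexOrder

lemma trace_ptraceB {A B : Type*} [Fintype A] [Fintype B] (ρ : Matrix (A × B) (A × B) ℂ) :
    (ptraceB ρ).trace = ρ.trace := by
  simp only [Matrix.trace, Matrix.diag, ptraceB, Matrix.of_apply, Fintype.sum_prod_type]

lemma trace_eq_one_of_ptraceB_eq {A B : Type*} [Fintype A] [Fintype B] [DecidableEq A]
    [Nonempty A] {ρ : Matrix (A × B) (A × B) ℂ}
    (hρ : ptraceB ρ = ((Fintype.card A : ℂ))⁻¹ • (1 : Matrix A A ℂ)) : ρ.trace = 1 := by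
  rw [← trace_ptraceB, hρ, trace_smul, trace_one, smul_eq_mul,
    inv_mul_cancel₀ (Nat.cast_ne_zero.mpr Fintype.card_ne_zero)]

lemma SepState.convex_comb {A B : Type*} [Fintype A] [Fintype B]
    {ρ σ : Matrix (A × B) (A × B) ℂ} (hρ : SepState ρ) (hσ : SepState σ)
    {q : ℝ} (hq₀ : 0 ≤ q) (hq₁ : q ≤ 1) :
    SepState ((q : ℂ) • ρ + ((1 - q : ℝ) : ℂ) • σ) := by
  obtain ⟨n, p, ψ, φ, hp₀, hp₁, hψ, hφ, rfl⟩ := hρ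
  obtain ⟨m, p', ψ', φ', hp₀', hp₁', hψ', hφ', rfl⟩ := hσ
  refine ⟨n + m, Fin.append (fun i => q * p i) (fun j => (1 - q) * p' j),
    Fin.append ψ ψ', Fin.append φ φ', ?_, ?_, ?_, ?_, ?_⟩
  · refine Fin.addCases (fun i => ?_) (fun j => ?_)
    · simpa using mul_nonneg hq₀ (hp₀ i)
    · simpa using mul_nonneg (sub_nonneg.mpr hq₁) (hp₀' j)
  · simp only [Fin.sum_univ_add, Fin.append_left, Fin.append_right, ← Finset.mul_sum, hp₁, hp₁']
    ring
  · exact Fin.addCases (by simpa using hψ) (by simpa using hψ')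
  · exact Fin.addCases (by simpa using hφ) (by simpa using hφ')
  · simp only [Fin.sum_univ_add, Fin.append_left, Fin.append_right, Finset.smul_sum, smul_smul,
      Complex.ofReal_mul]

lemma norm_toLp_eq_one {ι : Type*} [Fintype ι] {ψ : ι → ℂ} (hψ : star ψ ⬝ᵥ ψ = 1) :
    ‖WithLp.toLp 2 ψ‖ = 1 := by
  have h : ‖WithLp.toLp 2 ψ‖ ^ 2 = 1 := by
    rw [norm_sq_eq_re_inner (𝕜 := ℂ), EuclideanSpace.inner_eq_star_dotProduct, dotProduct_comm]
    simp [hψ]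
  exact (pow_eq_one_iff_of_nonneg (norm_nonneg _) two_ne_zero).mp h

lemma normSq_dotProduct_le_one {ι : Type*} [Fintype ι] {ψ φ : ι → ℂ}
    (hψ : star ψ ⬝ᵥ ψ = 1) (hφ : star φ ⬝ᵥ φ = 1) : Complex.normSq (ψ ⬝ᵥ φ) ≤ 1 := by
  have hψ' : star (star ψ) ⬝ᵥ star ψ = 1 := by rw [star_star, dotProduct_comm, hψ]
  have h := norm_inner_le_norm (𝕜 := ℂ) (WithLp.toLp 2 (star ψ)) (WithLp.toLp 2 φ)
  rw [EuclideanSpace.inner_eq_star_dotProduct, star_star, dotProduct_comm,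
    norm_toLp_eq_one hψ', norm_toLp_eq_one hφ, mul_one] at h
  rw [← Complex.sq_norm]
  exact pow_le_one₀ (norm_nonneg _) h

lemma sum_kronecker_outer_apply_diag {ι : Type*} [Fintype ι] (ψ φ : ι → ℂ) :
    ∑ i, ∑ j, (outer ψ ⊗ₖ outer φ) (j, j) (i, i) = Complex.normSq (ψ ⬝ᵥ φ) := by
  rw [← Complex.mul_conj, dotProduct, map_sum, Finset.sum_mul_sum, Finset.sum_comm]
  simp only [kroneckerMap_apply, outer, vecMulVec_apply, Pi.star_apply, RCLike.star_def,
    map_mul]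
  exact Finset.sum_congr rfl fun _ _ => Finset.sum_congr rfl fun _ _ => by ring

lemma SepState.exists_sum_apply_diag_eq {ι : Type*} [Fintype ι]
    {ρ : Matrix (ι × ι) (ι × ι) ℂ} (hρ : SepState ρ) :
    ∃ r : ℝ, r ∈ Set.Icc 0 1 ∧ ∑ i, ∑ j, ρ (j, j) (i, i) = r := by
  obtain ⟨n, p, ψ, φ, hp₀, hp₁, hψ, hφ, rfl⟩ := hρ
  refine ⟨∑ t, p t * Complex.normSq (ψ t ⬝ᵥ φ t), ⟨?_, ?_⟩, ?_⟩
  · exact Finset.sum_nonneg fun t _ => mul_nonneg (hp₀ t) (Complex.normSq_nonneg _)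
  · calc ∑ t, p t * Complex.normSq (ψ t ⬝ᵥ φ t) ≤ ∑ t, p t :=
          Finset.sum_le_sum fun t _ =>
            mul_le_of_le_one_right (hp₀ t) (normSq_dotProduct_le_one (hψ t) (hφ t))
      _ = 1 := hp₁
  · simp only [Matrix.sum_apply, Matrix.smul_apply, smul_eq_mul, Finset.sum_comm_cycle,
      ← Finset.mul_sum, sum_kronecker_outer_apply_diag]
    push_cast
    rfl

lemma trace_maxEnt_mul {d : ℕ} (X : Matrix (Fin d × Fin d) (Fin d × Fin d) ℂ) :
    (maxEnt d * X).trace = (d : ℂ)⁻¹ * ∑ i, ∑ j, X (j, j) (i, i) := by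
  simp only [trace, diag, mul_apply, maxEnt, of_apply, ite_mul, zero_mul, ite_and,
    Fintype.sum_prod_type, Finset.sum_ite_irrel, Finset.sum_const_zero, Finset.sum_ite_eq,
    Finset.mem_univ, if_true, Finset.mul_sum]

lemma trace_maxEnt_mul_maxEnt (d : ℕ) [NeZero d] : (maxEnt d * maxEnt d).trace = 1 := by
  rw [trace_maxEnt_mul]
  simp [maxEnt]

lemma trace_maxEnt (d : ℕ) [NeZero d] : (maxEnt d).trace = 1 := by
  rw [← mul_one (maxEnt d), trace_maxEnt_mul]
  simp [one_apply]

lemma SepState.exists_trace_maxEnt_mul_eq {d : ℕ} {ρ : Matrix (Fin d × Fin d) (Fin d × Fin d) ℂ}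
    (hρ : SepState ρ) : ∃ r : ℝ, r ∈ Set.Icc 0 1 ∧ (maxEnt d * ρ).trace = (d : ℂ)⁻¹ * r := by
  obtain ⟨r, hr, hsum⟩ := hρ.exists_sum_apply_diag_eq
  exact ⟨r, hr, by rw [trace_maxEnt_mul, hsum]⟩

theorem stmt18_general (dc : ℕ) (hdc : 0 < dc)
    {A B : Type*} [Fintype A] [Fintype B] [DecidableEq A]
    (ΦN ΦM ΦM' : Matrix (A × B) (A × B) ℂ)
    (hΦMsep : SepState ΦM)
    (hM' : ΦM' = (dc : ℂ)⁻¹ • ΦN + (((dc : ℂ) - 1) * (dc : ℂ)⁻¹) • ΦM)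
    (hM'sep : SepState ΦM')
    (Λ : Matrix (Fin dc × Fin dc) (Fin dc × Fin dc) ℂ → Matrix (A × B) (A × B) ℂ)
    (hΛ : ∀ X, Λ X = ((maxEnt dc * X).trace) • ΦN
      + (((1 - maxEnt dc) * X).trace) • ΦM) :
    Λ (maxEnt dc) = ΦN ∧
    ∀ ΦC : Matrix (Fin dc × Fin dc) (Fin dc × Fin dc) ℂ,
      SepState ΦC → ΦC.PosSemidef →
      ptraceB ΦC = (dc : ℂ)⁻¹ • (1 : Matrix (Fin dc) (Fin dc) ℂ) →
      ∀ q : ℝ, q = (dc : ℝ) * ((maxEnt dc * ΦC).trace).re →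
        Λ ΦC = ((q : ℝ) : ℂ) • ΦM' + (((1 - q : ℝ) : ℂ)) • ΦM ∧
        0 ≤ q ∧ q ≤ 1 ∧ SepState (Λ ΦC) := by
  have : NeZero dc := ⟨hdc.ne'⟩
  refine ⟨by simp [hΛ, sub_mul, trace_maxEnt_mul_maxEnt, trace_maxEnt], ?_⟩
  intro ΦC hsep _ hmarg q hq
  obtain ⟨r, ⟨hr₀, hr₁⟩, htr⟩ := hsep.exists_trace_maxEnt_mul_eq
  obtain rfl : q = r := by
    rw [hq, htr, ← Complex.ofReal_natCast, ← Complex.ofReal_inv, ← Complex.ofReal_mul,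
      Complex.ofReal_re, mul_inv_cancel_left₀ (NeZero.ne _)]
  have htrC : ΦC.trace = 1 := trace_eq_one_of_ptraceB_eq (by rwa [Fintype.card_fin])
  have hΛC : Λ ΦC = ((q : ℝ) : ℂ) • ΦM' + (((1 - q : ℝ) : ℂ)) • ΦM := by
    rw [hΛ, sub_mul, one_mul, trace_sub, htrC, htr, hM']
    push_cast
    match_scalars <;> field_simp
    ring
  exact ⟨hΛC, hr₀, hr₁, hΛC ▸ hM'sep.convex_comb hΦMsep hr₀ hr₁⟩

/-- The free superchannel used in one-shot memory synthesis, described on Choi states: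
`Λ(Φ_C) = Tr(φ⁺Φ_C) Φ_{N'} + Tr((1-φ⁺)Φ_C) Φ_M` sends the Choi state of the ideal
`d_c`-dimensional memory to `Φ_{N'}` and maps every separable Choi state to a
separable Choi state, via `Λ(Φ_C) = qΦ_{M'} + (1-q)Φ_M` with `q = d_c Tr(φ⁺Φ_C) ∈ [0,1]`. -/
theorem stmt18 (dc : ℕ) (hdc : 0 < dc)
    {A B : Type*} [Fintype A] [Fintype B] [DecidableEq A] [DecidableEq B]
    (ΦN ΦM ΦM' : Matrix (A × B) (A × B) ℂ)
    (hΦN : ΦN.PosSemidef)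
    (hΦNm : ptraceB ΦN = ((Fintype.card A : ℂ))⁻¹ • (1 : Matrix A A ℂ))
    (hΦMsep : SepState ΦM) (hΦMpsd : ΦM.PosSemidef)
    (hΦMm : ptraceB ΦM = ((Fintype.card A : ℂ))⁻¹ • (1 : Matrix A A ℂ))
    (hM' : ΦM' = (dc : ℂ)⁻¹ • ΦN + (((dc : ℂ) - 1) * (dc : ℂ)⁻¹) • ΦM)
    (hM'sep : SepState ΦM')
    (Λ : Matrix (Fin dc × Fin dc) (Fin dc × Fin dc) ℂ → Matrix (A × B) (A × B) ℂ)
    (hΛ : ∀ X, Λ X = ((maxEnt dc * X).trace) • ΦN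
      + (((1 - maxEnt dc) * X).trace) • ΦM) :
    Λ (maxEnt dc) = ΦN ∧
    ∀ ΦC : Matrix (Fin dc × Fin dc) (Fin dc × Fin dc) ℂ,
      SepState ΦC → ΦC.PosSemidef →
      ptraceB ΦC = (dc : ℂ)⁻¹ • (1 : Matrix (Fin dc) (Fin dc) ℂ) →
      ∀ q : ℝ, q = (dc : ℝ) * ((maxEnt dc * ΦC).trace).re →
        Λ ΦC = ((q : ℝ) : ℂ) • ΦM' + (((1 - q : ℝ) : ℂ)) • ΦM ∧
        0 ≤ q ∧ q ≤ 1 ∧ SepState (Λ ΦC) :=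
  stmt18_general dc hdc ΦN ΦM ΦM' hΦMsep hM' hM'sep Λ hΛ
end
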